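/- Suppose X₁ and X = [X₁, X₂] have full column rank (so that M₁X₂ also has full column rank). Then the matrix N₁ := M₁P satisfies N₁ = P M₁ = P M₁ P = M₁ P M₁ = N₁ M₁ = M₁ N₁ = N₁ N₁ = M₁ − M = P − P̄[X₁] = P̄[M₁X₂]; in particular N₁ is symmetric and idempotent. -/

import Mathlib

open Matrix

variable {T G k₁ k₂ : ℕ}

/-- Orthogonal projection `P̄[A] = A(AᵀA)⁻¹Aᵀ` onto the column space of `A`. -/
noncomputable def projM {n : Type*} [Fintype n] [DecidableEq n]
    (A : Matrix (Fin T) n ℝ) : Matrix (Fin T) (Fin T) ℝ :=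
  A * (Aᵀ * A)⁻¹ * Aᵀ

/-- The annihilator `M̄[A] = I - P̄[A]`. -/
noncomputable def annM {n : Type*} [Fintype n] [DecidableEq n]
    (A : Matrix (Fin T) n ℝ) : Matrix (Fin T) (Fin T) ℝ :=
  1 - projM A

noncomputable def M1 (X₁ : Matrix (Fin T) (Fin k₁) ℝ) : Matrix (Fin T) (Fin T) ℝ :=
  annM X₁

noncomputable def Pm (X₁ : Matrix (Fin T) (Fin k₁) ℝ) (X₂ : Matrix (Fin T) (Fin k₂) ℝ) :
    Matrix (Fin T) (Fin T) ℝ :=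
  projM (fromCols X₁ X₂)

noncomputable def Mm (X₁ : Matrix (Fin T) (Fin k₁) ℝ) (X₂ : Matrix (Fin T) (Fin k₂) ℝ) :
    Matrix (Fin T) (Fin T) ℝ :=
  annM (fromCols X₁ X₂)

noncomputable def N1 (X₁ : Matrix (Fin T) (Fin k₁) ℝ) (X₂ : Matrix (Fin T) (Fin k₂) ℝ) :
    Matrix (Fin T) (Fin T) ℝ :=
  M1 X₁ * Pm X₁ X₂

/-!
Since the columns of `X₁` lie in the column space of `X`, `P P̄[X₁] = P̄[X₁] = P̄[X₁] P`; hence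
`M₁P = P - P̄[X₁]`, and every product in the list collapses to `P - P̄[X₁]` by idempotence of `P`
and `P̄[X₁]`. The matrix `P - P̄[X₁]` is symmetric, fixes `M₁X₂`, and has its column space inside
that of `M₁X₂` because `M₁X = [0, M₁X₂]`; such a matrix is the projection onto the column space of
`M₁X₂`. Finally `M₁X₂` has full column rank since its Gram matrix `X₂ᵀM₁X₂` is the Schur complement
of `X₁ᵀX₁` in `XᵀX`.
-/

section Rank

variable {K n : Type*} [Field K] [Fintype n] [DecidableEq n]

theorem Matrix.isUnit_of_rank_eq_card {A : Matrix n n K} (h : A.rank = Fintype.card n) :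
    IsUnit A := by
  rw [← mulVec_surjective_iff_isUnit, ← coe_mulVecLin, ← LinearMap.range_eq_top]
  apply Submodule.eq_top_of_finrank_eq
  rw [← rank, h, Module.finrank_fintype_fun_eq_card]

end Rank

section Projection

variable {n : Type*} [Fintype n] [DecidableEq n] {A : Matrix (Fin T) n ℝ}
  {Q : Matrix (Fin T) (Fin T) ℝ}

theorem isUnit_transpose_mul_self_of_rank_eq (h : A.rank = Fintype.card n) :
    IsUnit (Aᵀ * A) :=
  isUnit_of_rank_eq_card (by rw [rank_transpose_mul_self, h])

theorem transpose_projM (A : Matrix (Fin T) n ℝ) : (projM A)ᵀ = projM A := by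
  simp only [projM, transpose_mul, transpose_transpose, transpose_nonsing_inv, Matrix.mul_assoc]

theorem mul_projM_of_mul_eq (hQ : Q * A = A) : Q * projM A = projM A := by
  rw [projM, ← Matrix.mul_assoc, ← Matrix.mul_assoc, hQ]

theorem projM_mul_of_mul_eq (hQs : Qᵀ = Q) (hQ : Q * A = A) : projM A * Q = projM A := by
  simpa only [transpose_mul, transpose_projM, hQs] using congrArg transpose (mul_projM_of_mul_eq hQ)

theorem projM_mul_self (hA : IsUnit (Aᵀ * A)) : projM A * A = A := by
  rw [projM, Matrix.mul_assoc, Matrix.mul_assoc,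
    nonsing_inv_mul _ ((isUnit_iff_isUnit_det _).mp hA), Matrix.mul_one]

theorem projM_mul_projM (hA : IsUnit (Aᵀ * A)) : projM A * projM A = projM A :=
  mul_projM_of_mul_eq (projM_mul_self hA)

theorem annM_mul_self (hA : IsUnit (Aᵀ * A)) : annM A * A = 0 := by
  rw [annM, Matrix.sub_mul, Matrix.one_mul, projM_mul_self hA, sub_self]

theorem transpose_annM (A : Matrix (Fin T) n ℝ) : (annM A)ᵀ = annM A := by
  rw [annM, transpose_sub, transpose_one, transpose_projM]

theorem annM_mul_annM (hA : IsUnit (Aᵀ * A)) : annM A * annM A = annM A := by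
  rw [annM, Matrix.sub_mul, Matrix.one_mul, Matrix.mul_sub, Matrix.mul_one, projM_mul_projM hA,
    sub_self, sub_zero]

theorem eq_projM_of_mul_eq {E : Matrix n (Fin T) ℝ} (hA : IsUnit (Aᵀ * A)) (hQs : Qᵀ = Q)
    (hQ : Q * A = A) (hE : Q = A * E) : Q = projM A :=
  calc Q = projM A * Q := by rw [hE, ← Matrix.mul_assoc, projM_mul_self hA]
    _ = projM A := projM_mul_of_mul_eq hQs hQ

end Projection

section Partitioned

variable {X₁ : Matrix (Fin T) (Fin k₁) ℝ} {X₂ : Matrix (Fin T) (Fin k₂) ℝ}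

theorem Pm_mul_left_and_right (hX : IsUnit ((fromCols X₁ X₂)ᵀ * fromCols X₁ X₂)) :
    Pm X₁ X₂ * X₁ = X₁ ∧ Pm X₁ X₂ * X₂ = X₂ := by
  rw [← fromCols_ext_iff, ← mul_fromCols]
  exact projM_mul_self hX

theorem Pm_mul_projM (hX : IsUnit ((fromCols X₁ X₂)ᵀ * fromCols X₁ X₂)) :
    Pm X₁ X₂ * projM X₁ = projM X₁ :=
  mul_projM_of_mul_eq (Pm_mul_left_and_right hX).1

theorem projM_mul_Pm (hX : IsUnit ((fromCols X₁ X₂)ᵀ * fromCols X₁ X₂)) :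
    projM X₁ * Pm X₁ X₂ = projM X₁ :=
  projM_mul_of_mul_eq (transpose_projM _) (Pm_mul_left_and_right hX).1

theorem N1_eq_Pm_sub_projM (hX : IsUnit ((fromCols X₁ X₂)ᵀ * fromCols X₁ X₂)) :
    N1 X₁ X₂ = Pm X₁ X₂ - projM X₁ := by
  rw [N1, M1, annM, Matrix.sub_mul, Matrix.one_mul, projM_mul_Pm hX]

theorem transpose_M1_mul_mul_M1_mul (hX₁ : IsUnit (X₁ᵀ * X₁)) :
    (M1 X₁ * X₂)ᵀ * (M1 X₁ * X₂) = X₂ᵀ * X₂ - X₂ᵀ * X₁ * (X₁ᵀ * X₁)⁻¹ * (X₁ᵀ * X₂) :=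
  calc (M1 X₁ * X₂)ᵀ * (M1 X₁ * X₂) = X₂ᵀ * (M1 X₁ * M1 X₁) * X₂ := by
        rw [transpose_mul, M1, transpose_annM]; simp only [Matrix.mul_assoc]
    _ = X₂ᵀ * (1 - projM X₁) * X₂ := by rw [M1, annM_mul_annM hX₁, annM]
    _ = X₂ᵀ * X₂ - X₂ᵀ * X₁ * (X₁ᵀ * X₁)⁻¹ * (X₁ᵀ * X₂) := by
        simp only [projM, Matrix.mul_sub, Matrix.sub_mul, Matrix.mul_one, Matrix.mul_assoc]

theorem isUnit_transpose_M1_mul_mul_M1_mul (hX₁ : IsUnit (X₁ᵀ * X₁))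
    (hX : IsUnit ((fromCols X₁ X₂)ᵀ * fromCols X₁ X₂)) :
    IsUnit ((M1 X₁ * X₂)ᵀ * (M1 X₁ * X₂)) := by
  have := hX₁.invertible
  rw [transpose_fromCols, fromRows_mul_fromCols, isUnit_fromBlocks_iff_of_invertible₁₁] at hX
  rwa [transpose_M1_mul_mul_M1_mul hX₁, ← invOf_eq_nonsing_inv]

theorem Pm_sub_projM_eq_M1_mul_mul (hX₁ : IsUnit (X₁ᵀ * X₁))
    (hX : IsUnit ((fromCols X₁ X₂)ᵀ * fromCols X₁ X₂)) :
    Pm X₁ X₂ - projM X₁ =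
      M1 X₁ * X₂ * toRows₂ (((fromCols X₁ X₂)ᵀ * fromCols X₁ X₂)⁻¹ * (fromCols X₁ X₂)ᵀ) := by
  set B := ((fromCols X₁ X₂)ᵀ * fromCols X₁ X₂)⁻¹ * (fromCols X₁ X₂)ᵀ
  calc Pm X₁ X₂ - projM X₁ = M1 X₁ * fromCols X₁ X₂ * fromRows (toRows₁ B) (toRows₂ B) := by
        rw [← N1_eq_Pm_sub_projM hX, N1, Pm, projM, fromRows_toRows, Matrix.mul_assoc _ _ B,
          Matrix.mul_assoc]
    _ = M1 X₁ * X₂ * toRows₂ B := by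
        rw [mul_fromCols, fromCols_mul_fromRows, M1, annM_mul_self hX₁, Matrix.zero_mul, zero_add]

theorem Pm_sub_projM_mul_M1_mul (hX₁ : IsUnit (X₁ᵀ * X₁))
    (hX : IsUnit ((fromCols X₁ X₂)ᵀ * fromCols X₁ X₂)) :
    (Pm X₁ X₂ - projM X₁) * (M1 X₁ * X₂) = M1 X₁ * X₂ :=
  calc (Pm X₁ X₂ - projM X₁) * (M1 X₁ * X₂) = (Pm X₁ X₂ - projM X₁) * X₂ := by
        rw [M1, annM, ← Matrix.mul_assoc, Matrix.mul_sub, Matrix.mul_one,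
          Matrix.sub_mul _ _ (projM X₁), Pm_mul_projM hX, projM_mul_projM hX₁, sub_self, sub_zero]
    _ = M1 X₁ * X₂ := by
        rw [Matrix.sub_mul, (Pm_mul_left_and_right hX).2, M1, annM, Matrix.sub_mul, Matrix.one_mul]

theorem Pm_sub_projM_eq_projM_M1_mul (hX₁ : IsUnit (X₁ᵀ * X₁))
    (hX : IsUnit ((fromCols X₁ X₂)ᵀ * fromCols X₁ X₂)) :
    Pm X₁ X₂ - projM X₁ = projM (M1 X₁ * X₂) :=
  eq_projM_of_mul_eq (isUnit_transpose_M1_mul_mul_M1_mul hX₁ hX)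
    (by rw [transpose_sub, Pm, transpose_projM, transpose_projM])
    (Pm_sub_projM_mul_M1_mul hX₁ hX) (Pm_sub_projM_eq_M1_mul_mul hX₁ hX)

end Partitioned

/-- **Properties of `N₁ = M₁P`.**  If `X₁` and `X = [X₁, X₂]` have full column rank,
then `N₁ = PM₁ = PM₁P = M₁PM₁ = N₁M₁ = M₁N₁ = N₁N₁ = M₁ − M = P − P̄[X₁] = P̄[M₁X₂]`;
in particular `N₁` is symmetric and idempotent. -/
theorem stmt2 {T k₁ k₂ : ℕ}
    (X₁ : Matrix (Fin T) (Fin k₁) ℝ) (X₂ : Matrix (Fin T) (Fin k₂) ℝ)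
    (hrX₁ : X₁.rank = k₁) (hrX : (fromCols X₁ X₂).rank = k₁ + k₂) :
    N1 X₁ X₂ = Pm X₁ X₂ * M1 X₁ ∧
    N1 X₁ X₂ = Pm X₁ X₂ * M1 X₁ * Pm X₁ X₂ ∧
    N1 X₁ X₂ = M1 X₁ * Pm X₁ X₂ * M1 X₁ ∧
    N1 X₁ X₂ = N1 X₁ X₂ * M1 X₁ ∧
    N1 X₁ X₂ = M1 X₁ * N1 X₁ X₂ ∧
    N1 X₁ X₂ = N1 X₁ X₂ * N1 X₁ X₂ ∧
    N1 X₁ X₂ = M1 X₁ - Mm X₁ X₂ ∧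
    N1 X₁ X₂ = Pm X₁ X₂ - projM X₁ ∧
    N1 X₁ X₂ = projM (M1 X₁ * X₂) ∧
    (N1 X₁ X₂).IsSymm ∧
    N1 X₁ X₂ * N1 X₁ X₂ = N1 X₁ X₂ := by
  have hX₁ : IsUnit (X₁ᵀ * X₁) := isUnit_transpose_mul_self_of_rank_eq (by simpa using hrX₁)
  have hX : IsUnit ((fromCols X₁ X₂)ᵀ * fromCols X₁ X₂) :=
    isUnit_transpose_mul_self_of_rank_eq (by simpa using hrX)
  have hN : N1 X₁ X₂ = Pm X₁ X₂ - projM X₁ := N1_eq_Pm_sub_projM hX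
  have hM1 : M1 X₁ = 1 - projM X₁ := rfl
  have hMm : Mm X₁ X₂ = 1 - Pm X₁ X₂ := rfl
  have hPP : Pm X₁ X₂ * Pm X₁ X₂ = Pm X₁ X₂ := projM_mul_projM hX
  have hNN : N1 X₁ X₂ * N1 X₁ X₂ = N1 X₁ X₂ := by
    simp only [hN, Matrix.mul_sub, Matrix.sub_mul, hPP, projM_mul_projM hX₁, Pm_mul_projM hX,
      projM_mul_Pm hX, sub_self, sub_zero]
  refine ⟨?_, ?_, ?_, ?_, ?_, hNN.symm, ?_, hN, hN.trans (Pm_sub_projM_eq_projM_M1_mul hX₁ hX),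
    by rw [hN, IsSymm, transpose_sub, Pm, transpose_projM, transpose_projM], hNN⟩
  all_goals simp only [hN, hM1, hMm, Matrix.mul_sub, Matrix.sub_mul, Matrix.mul_one,
      Matrix.one_mul, hPP, projM_mul_projM hX₁, Pm_mul_projM hX, projM_mul_Pm hX,
      sub_self, sub_zero, sub_sub_sub_cancel_left]
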